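/- arXiv:1501.04783 — 5 statements merged into one kernel-verified Lean document; each statement's English description precedes it below -/
import Mathlib

section
/- For all vectors u, v, w in ℝ⁷, the associator equality holds: φ₀(u,v,w)² + ‖χ(u,v,w)‖² = ‖u∧v∧w‖², where ‖u∧v∧w‖² denotes the determinant of the Gram matrix (⟨u,u⟩,⟨u,v⟩,⟨u,w⟩; ⟨v,u⟩,⟨v,v⟩,⟨v,w⟩; ⟨w,u⟩,⟨w,v⟩,⟨w,w⟩). -/
open scoped RealInnerProductSpace

noncomputable section

/-- ℝ⁷ with its Euclidean inner product. -/
abbrev V7 := EuclideanSpace ℝ (Fin 7)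

/-- The standard G₂ 3-form φ₀ = e¹²³+e¹⁴⁵+e¹⁶⁷+e²⁴⁶−e²⁵⁷−e³⁴⁷−e³⁵⁶ on ℝ⁷
(indices shifted to 0-based), written as a trilinear alternating function. -/
def phi0 : (Fin 3 → V7) → ℝ := fun v =>
  let m : Fin 7 → Fin 7 → Fin 7 → ℝ := fun i j k =>
    Matrix.det !![v 0 i, v 0 j, v 0 k; v 1 i, v 1 j, v 1 k; v 2 i, v 2 j, v 2 k]
  m 0 1 2 + m 0 3 4 + m 0 5 6 + m 1 3 5 - m 1 4 6 - m 2 3 6 - m 2 4 5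

/-- The 4-form ∗φ₀ = e⁴⁵⁶⁷+e²³⁶⁷+e²³⁴⁵+e¹³⁵⁷−e¹³⁴⁶−e¹²⁵⁶−e¹²⁴⁷ (0-based indices). -/
def starPhi0 : (Fin 4 → V7) → ℝ := fun v =>
  let m : Fin 7 → Fin 7 → Fin 7 → Fin 7 → ℝ := fun i j k l =>
    Matrix.det !![v 0 i, v 0 j, v 0 k, v 0 l; v 1 i, v 1 j, v 1 k, v 1 l;
                  v 2 i, v 2 j, v 2 k, v 2 l; v 3 i, v 3 j, v 3 k, v 3 l]
  m 3 4 5 6 + m 1 2 5 6 + m 1 2 3 4 + m 0 2 4 6 - m 0 2 3 5 - m 0 1 4 5 - m 0 1 3 6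

/-- The cross product on ℝ⁷: the unique vector with ⟨u×v, z⟩ = φ₀(u,v,z) for all z. -/
def cross (u v : V7) : V7 := WithLp.toLp 2 (fun i => phi0 ![u, v, EuclideanSpace.single i 1])

/-- The triple cross product χ: the unique vector with ⟨χ(u,v,w), z⟩ = ∗φ₀(u,v,w,z). -/
def chi (u v w : V7) : V7 := WithLp.toLp 2 (fun i => starPhi0 ![u, v, w, EuclideanSpace.single i 1])

/-- Interior product ξ⌟α : contraction of a (k+1)-form with ξ in its first slot. -/
def iprod {k : ℕ} (ξ : V7) (α : (Fin (k + 1) → V7) → ℝ) : (Fin k → V7) → ℝ :=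
  fun v => α (Fin.cons ξ v)

/-- Wedge product of alternating forms (determinant convention). -/
def wedge {p q : ℕ} (α : (Fin p → V7) → ℝ) (β : (Fin q → V7) → ℝ) :
    (Fin (p + q) → V7) → ℝ := fun v =>
  (1 / ((p.factorial : ℝ) * q.factorial)) *
    ∑ σ : Equiv.Perm (Fin (p + q)), ((Equiv.Perm.sign σ : ℤ) : ℝ) *
      α (fun i => v (σ (Fin.castAdd q i))) * β (fun j => v (σ (Fin.natAdd p j)))

/-- The dual covector ξ^# = ⟨ξ,·⟩, as a 1-form. -/
def dualCov (ξ : V7) : (Fin 1 → V7) → ℝ := fun v => ⟪ξ, v 0⟫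

/-- The standard volume form e¹∧⋯∧e⁷ on ℝ⁷. -/
def vol7 : (Fin 7 → V7) → ℝ := fun v => Matrix.det (Matrix.of fun i j => v i j)

/-! Expanding along the basis vector in the last slot, each component of `χ(u,v,w)` is a signed
sum of four of the 3×3 minors `p_{ijk}` of the 3×7 matrix with rows `u, v, w`, just as
`φ₀(u,v,w)` is a signed sum of seven. The 35 triples involved are pairwise distinct: the seven
lines of the Fano plane for `φ₀`, and the 3-subsets of their complements for `χ`. So the left side
is `∑ p_{ijk}²`, which is the Gram determinant by Cauchy–Binet, plus cross terms that vanish on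
decomposable trivectors `u∧v∧w` by the Plücker relations. In the 21 coordinates of `u, v, w` all
of this is a single polynomial identity. -/

theorem Matrix.det_fin_four_eq_expand_last_row {R : Type*} [CommRing R]
    (a b c d e f g h i j k l m n o p : R) :
    !![a, b, c, d; e, f, g, h; i, j, k, l; m, n, o, p].det =
      -m * !![b, c, d; f, g, h; j, k, l].det + n * !![a, c, d; e, g, h; i, k, l].det
        - o * !![a, b, d; e, f, h; i, j, l].det + p * !![a, b, c; e, f, g; i, j, k].det := by
  simp [Matrix.det_succ_row _ 3, Fin.sum_univ_succ, Fin.succAbove]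
  ring

/-- The coordinate of `u ∧ v ∧ w` on `e^{ijk}` (0-based indices). -/
def minor3 (u v w : V7) (i j k : Fin 7) : ℝ :=
  !![u i, u j, u k; v i, v j, v k; w i, w j, w k].det

theorem phi0_eq_minor3 (u v w : V7) :
    phi0 ![u, v, w] = minor3 u v w 0 1 2 + minor3 u v w 0 3 4 + minor3 u v w 0 5 6
      + minor3 u v w 1 3 5 - minor3 u v w 1 4 6 - minor3 u v w 2 3 6 - minor3 u v w 2 4 5 :=
  rfl

theorem chi_eq_minor3 (u v w : V7) :
    chi u v w = WithLp.toLp 2 ![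
      minor3 u v w 1 3 6 + minor3 u v w 1 4 5 + minor3 u v w 2 3 5 - minor3 u v w 2 4 6,
      -minor3 u v w 0 3 6 - minor3 u v w 0 4 5 - minor3 u v w 2 3 4 - minor3 u v w 2 5 6,
      -minor3 u v w 0 3 5 + minor3 u v w 0 4 6 + minor3 u v w 1 3 4 + minor3 u v w 1 5 6,
      minor3 u v w 0 1 6 + minor3 u v w 0 2 5 - minor3 u v w 1 2 4 - minor3 u v w 4 5 6,
      minor3 u v w 0 1 5 - minor3 u v w 0 2 6 + minor3 u v w 1 2 3 + minor3 u v w 3 5 6,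
      -minor3 u v w 0 1 4 - minor3 u v w 0 2 3 - minor3 u v w 1 2 6 - minor3 u v w 3 4 6,
      -minor3 u v w 0 1 3 + minor3 u v w 0 2 4 + minor3 u v w 1 2 5 + minor3 u v w 3 4 5] := by
  ext i
  fin_cases i <;>
    simp only [chi, starPhi0, minor3, Matrix.det_fin_four_eq_expand_last_row, PiLp.single_apply,
      Matrix.cons_val, Fin.isValue, Fin.reduceFinMk, Fin.reduceEq, ↓reduceIte] <;> ring

/-- the associator equality
φ₀(u,v,w)² + ‖χ(u,v,w)‖² = ‖u∧v∧w‖² (Gram determinant). -/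
theorem associator_equality (u v w : V7) :
    (phi0 ![u, v, w]) ^ 2 + ‖chi u v w‖ ^ 2 =
      Matrix.det !![⟪u, u⟫, ⟪u, v⟫, ⟪u, w⟫;
                    ⟪v, u⟫, ⟪v, v⟫, ⟪v, w⟫;
                    ⟪w, u⟫, ⟪w, v⟫, ⟪w, w⟫] := by
  rw [EuclideanSpace.norm_sq_eq, phi0_eq_minor3, chi_eq_minor3]
  simp only [minor3, Matrix.det_fin_three, Matrix.of_apply, Matrix.cons_val, Fin.isValue,
    PiLp.inner_apply, RCLike.inner_apply, conj_trivial, Fin.sum_univ_seven, Real.norm_eq_abs, sq_abs]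
  ring

end
end

section
/- Let u, v be orthonormal vectors in ℝ⁷ and let L = span{u, v, u×v} (an associative 3-plane). Define j(X) = χ(u,v,X). Then for all X, Y orthogonal to L: (1) j(X) is orthogonal to L; (2) j(j(X)) = −X; (3) ⟨j(X), j(Y)⟩ = ⟨X,Y⟩. Hence j is an orthogonal complex structure on the orthogonal complement L^⊥. -/
open scoped RealInnerProductSpace

noncomputable section

/-!
Two coordinate identities carry the argument: `a × (a × w) = ⟪a, w⟫ a - ⟪a, a⟫ w` and
`χ(a, b, w) = ⟪a, w⟫ b - ⟪a, b⟫ w - a × (b × w)`. Together with `⟪a, b × c⟫ = ⟪a × b, c⟫` they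
show that `χ(a, b, w)` is always orthogonal to `a`, `b` and `a × b`. For a unit vector `a` the
map `a ×` is an isometry of `a^⊥` squaring to `-1`; for orthonormal `u, v` the maps `u ×` and
`v ×` anticommute on `{u, v}^⊥` (polarize the first identity), and `j = -(u ×) ∘ (v ×)` on `u^⊥`.
Hence `j² = (u ×)(v ×)(u ×)(v ×) = -(u ×)²(v ×)² = -1`, and `j` is an isometry of `L^⊥`.
-/

theorem Matrix.det_fin_four {R : Type*} [CommRing R] (A : Matrix (Fin 4) (Fin 4) R) :
    A.det =
      A 0 0 * (A 1 1 * (A 2 2 * A 3 3 - A 2 3 * A 3 2) - A 1 2 * (A 2 1 * A 3 3 - A 2 3 * A 3 1)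
        + A 1 3 * (A 2 1 * A 3 2 - A 2 2 * A 3 1))
      - A 0 1 * (A 1 0 * (A 2 2 * A 3 3 - A 2 3 * A 3 2) - A 1 2 * (A 2 0 * A 3 3 - A 2 3 * A 3 0)
        + A 1 3 * (A 2 0 * A 3 2 - A 2 2 * A 3 0))
      + A 0 2 * (A 1 0 * (A 2 1 * A 3 3 - A 2 3 * A 3 1) - A 1 1 * (A 2 0 * A 3 3 - A 2 3 * A 3 0)
        + A 1 3 * (A 2 0 * A 3 1 - A 2 1 * A 3 0))
      - A 0 3 * (A 1 0 * (A 2 1 * A 3 2 - A 2 2 * A 3 1) - A 1 1 * (A 2 0 * A 3 2 - A 2 2 * A 3 0)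
        + A 1 2 * (A 2 0 * A 3 1 - A 2 1 * A 3 0)) := by
  rw [det_succ_row_zero, Fin.sum_univ_four]
  simp only [det_fin_three, submatrix_apply, Fin.succAbove, Fin.reduceSucc, Fin.reduceCastSucc,
    Fin.reduceLT, Fin.isValue, Fin.coe_ofNat_eq_mod, reduceIte]
  ring

theorem Submodule.mem_orthogonal_span_triple_iff {𝕜 E : Type*} [RCLike 𝕜]
    [NormedAddCommGroup E] [InnerProductSpace 𝕜 E] {a b c x : E} :
    x ∈ (span 𝕜 {a, b, c})ᗮ ↔ inner 𝕜 a x = 0 ∧ inner 𝕜 b x = 0 ∧ inner 𝕜 c x = 0 := by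
  rw [span_insert, span_insert, ← inf_orthogonal, ← inf_orthogonal, mem_inf, mem_inf,
    mem_orthogonal_singleton_iff_inner_right, mem_orthogonal_singleton_iff_inner_right,
    mem_orthogonal_singleton_iff_inner_right]

theorem cross_eq (u v : V7) : cross u v = WithLp.toLp 2 ![
    u 1 * v 2 - u 2 * v 1 + u 3 * v 4 - u 4 * v 3 + u 5 * v 6 - u 6 * v 5,
    u 2 * v 0 - u 0 * v 2 + u 3 * v 5 - u 5 * v 3 + u 6 * v 4 - u 4 * v 6,
    u 0 * v 1 - u 1 * v 0 + u 5 * v 4 - u 4 * v 5 + u 6 * v 3 - u 3 * v 6,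
    u 4 * v 0 - u 0 * v 4 + u 5 * v 1 - u 1 * v 5 + u 2 * v 6 - u 6 * v 2,
    u 0 * v 3 - u 3 * v 0 + u 1 * v 6 - u 6 * v 1 + u 2 * v 5 - u 5 * v 2,
    u 6 * v 0 - u 0 * v 6 + u 1 * v 3 - u 3 * v 1 + u 4 * v 2 - u 2 * v 4,
    u 0 * v 5 - u 5 * v 0 + u 3 * v 2 - u 2 * v 3 + u 4 * v 1 - u 1 * v 4] := by
  ext i
  fin_cases i <;>
    simp only [cross, phi0, Matrix.det_fin_three, Matrix.of_apply, Matrix.cons_val',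
      Matrix.cons_val_fin_one, PiLp.single_apply, Fin.reduceEq, reduceIte, Fin.isValue,
      Fin.zero_eta, Fin.mk_one, Fin.reduceFinMk, Matrix.cons_val, Matrix.cons_val_zero,
      Matrix.cons_val_one] <;> ring

theorem cross_swap (a b : V7) : cross a b = -cross b a := by
  ext i
  fin_cases i <;>
    simp only [cross_eq, PiLp.neg_apply, Fin.isValue, Fin.zero_eta, Fin.mk_one, Fin.reduceFinMk,
      Matrix.cons_val, Matrix.cons_val_zero, Matrix.cons_val_one] <;> ring

theorem cross_self_eq_zero (a : V7) : cross a a = 0 := by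
  ext i
  fin_cases i <;>
    simp only [cross_eq, PiLp.zero_apply, Fin.isValue, Fin.zero_eta, Fin.mk_one, Fin.reduceFinMk,
      Matrix.cons_val, Matrix.cons_val_zero, Matrix.cons_val_one] <;> ring

theorem cross_neg_right (a b : V7) : cross a (-b) = -cross a b := by
  ext i
  fin_cases i <;>
    simp only [cross_eq, PiLp.neg_apply, Fin.isValue, Fin.zero_eta, Fin.mk_one, Fin.reduceFinMk,
      Matrix.cons_val, Matrix.cons_val_zero, Matrix.cons_val_one] <;> ring

theorem inner_cross_right (a b c : V7) : ⟪a, cross b c⟫ = ⟪cross a b, c⟫ := by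
  simp only [cross_eq, PiLp.inner_apply, RCLike.inner_apply, conj_trivial, Fin.sum_univ_seven,
    Fin.isValue, Matrix.cons_val, Matrix.cons_val_zero, Matrix.cons_val_one]
  ring

theorem cross_cross_self (a w : V7) : cross a (cross a w) = ⟪a, w⟫ • a - ⟪a, a⟫ • w := by
  ext i
  fin_cases i <;>
    simp only [cross_eq, PiLp.inner_apply, RCLike.inner_apply, conj_trivial, Fin.sum_univ_seven,
      PiLp.sub_apply, PiLp.smul_apply, smul_eq_mul, Fin.isValue, Fin.zero_eta, Fin.mk_one,
      Fin.reduceFinMk, Matrix.cons_val, Matrix.cons_val_zero, Matrix.cons_val_one] <;> ring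

theorem cross_cross_add_cross_cross (a b w : V7) :
    cross a (cross b w) + cross b (cross a w) = ⟪a, w⟫ • b + ⟪b, w⟫ • a - (2 * ⟪a, b⟫) • w := by
  ext i
  fin_cases i <;>
    simp only [cross_eq, PiLp.inner_apply, RCLike.inner_apply, conj_trivial, Fin.sum_univ_seven,
      PiLp.add_apply, PiLp.sub_apply, PiLp.smul_apply, smul_eq_mul, Fin.isValue, Fin.zero_eta,
      Fin.mk_one, Fin.reduceFinMk, Matrix.cons_val, Matrix.cons_val_zero, Matrix.cons_val_one] <;>
    ring

theorem chi_eq (a b w : V7) : chi a b w = ⟪a, w⟫ • b - ⟪a, b⟫ • w - cross a (cross b w) := by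
  ext i
  fin_cases i <;>
    simp only [chi, starPhi0, Matrix.det_fin_four, Matrix.of_apply, Matrix.cons_val',
      Matrix.cons_val_fin_one, PiLp.single_apply, Fin.reduceEq, reduceIte, cross_eq,
      PiLp.inner_apply, RCLike.inner_apply, conj_trivial, Fin.sum_univ_seven, PiLp.sub_apply,
      PiLp.smul_apply, smul_eq_mul, Fin.isValue, Fin.zero_eta, Fin.mk_one, Fin.reduceFinMk,
      Matrix.cons_val, Matrix.cons_val_zero, Matrix.cons_val_one] <;> ring

theorem inner_self_cross (a b : V7) : ⟪a, cross a b⟫ = 0 := by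
  rw [inner_cross_right, cross_self_eq_zero, inner_zero_left]

theorem inner_cross_self (a b : V7) : ⟪b, cross a b⟫ = 0 := by
  rw [cross_swap, inner_neg_right, inner_self_cross, neg_zero]

theorem inner_cross_cross (a b c : V7) :
    ⟪cross a b, cross a c⟫ = ⟪a, a⟫ * ⟪b, c⟫ - ⟪a, b⟫ * ⟪a, c⟫ := by
  rw [inner_cross_right, cross_swap (cross a b) a, inner_neg_left, cross_cross_self,
    inner_sub_left, real_inner_smul_left, real_inner_smul_left, real_inner_comm c b]
  ring

theorem inner_chi_left (a b w : V7) : ⟪a, chi a b w⟫ = 0 := by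
  rw [chi_eq, inner_sub_right, inner_sub_right, real_inner_smul_right, real_inner_smul_right,
    inner_self_cross]
  ring

theorem inner_chi_middle (a b w : V7) : ⟪b, chi a b w⟫ = 0 := by
  rw [chi_eq, inner_sub_right, inner_sub_right, real_inner_smul_right, real_inner_smul_right,
    inner_cross_right, inner_cross_cross, real_inner_comm a b]
  ring

theorem inner_cross_chi (a b w : V7) : ⟪cross a b, chi a b w⟫ = 0 := by
  rw [chi_eq, inner_sub_right, inner_sub_right, real_inner_smul_right, real_inner_smul_right,
    inner_cross_cross, inner_self_cross, inner_cross_right, real_inner_comm b, inner_cross_self]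
  ring

theorem chi_mem_orthogonal_span (a b w : V7) :
    chi a b w ∈ (Submodule.span ℝ {a, b, cross a b})ᗮ :=
  Submodule.mem_orthogonal_span_triple_iff.mpr
    ⟨inner_chi_left a b w, inner_chi_middle a b w, inner_cross_chi a b w⟩

section OrthogonalPair

variable {u v : V7} (huv : ⟪u, v⟫ = 0)
include huv

theorem chi_eq_neg_cross_cross {X : V7} (hX : ⟪u, X⟫ = 0) :
    chi u v X = -cross u (cross v X) := by
  rw [chi_eq, hX, huv, zero_smul, zero_smul, sub_zero, zero_sub]

theorem inner_chi_chi {X Y : V7} (hX : ⟪u, X⟫ = 0) (hY : ⟪u, Y⟫ = 0) :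
    ⟪chi u v X, chi u v Y⟫ =
      ⟪u, u⟫ * (⟪v, v⟫ * ⟪X, Y⟫ - ⟪v, X⟫ * ⟪v, Y⟫) - ⟪cross u v, X⟫ * ⟪cross u v, Y⟫ := by
  rw [chi_eq_neg_cross_cross huv hX, chi_eq_neg_cross_cross huv hY, inner_neg_neg,
    inner_cross_cross, inner_cross_cross, inner_cross_right, inner_cross_right]

theorem chi_chi {X : V7} (hu : ⟪u, u⟫ = 1) (hv : ⟪v, v⟫ = 1) (hXu : ⟪u, X⟫ = 0)
    (hXv : ⟪v, X⟫ = 0) (hXuv : ⟪cross u v, X⟫ = 0) : chi u v (chi u v X) = -X := by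
  set Z := cross u (cross v X)
  have hZ : chi u v X = -Z := chi_eq_neg_cross_cross huv hXu
  have huZ : ⟪u, Z⟫ = 0 := inner_self_cross _ _
  have hvZ : ⟪v, Z⟫ = 0 := by
    rw [← neg_eq_zero, ← inner_neg_right, ← hZ, inner_chi_middle]
  have huuZ : cross u Z = -cross v X := by
    rw [cross_cross_self, inner_cross_right, hXuv, hu, zero_smul, one_smul, zero_sub]
  have hanti := cross_cross_add_cross_cross u v Z
  rw [huZ, hvZ, huv, huuZ, cross_neg_right, cross_cross_self, hXv, hv] at hanti
  have huvZ : cross u (cross v Z) = -X := by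
    simpa [sub_eq_add_neg, add_eq_zero_iff_eq_neg] using hanti
  rw [chi_eq_neg_cross_cross huv (by rw [hZ, inner_neg_right, huZ, neg_zero]), hZ,
    cross_neg_right, cross_neg_right, neg_neg, huvZ]

end OrthogonalPair

/-- for orthonormal u,v and L = span{u,v,u×v}, the map
j(X) = χ(u,v,X) preserves L^⊥, squares to −1 on L^⊥ and is orthogonal there:
an orthogonal complex structure on L^⊥. -/
theorem chi_complex_structure (u v : V7) (h : Orthonormal ℝ ![u, v])
    (L : Submodule ℝ V7) (hL : L = Submodule.span ℝ {u, v, cross u v}) :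
    (∀ X ∈ Lᗮ, chi u v X ∈ Lᗮ) ∧
    (∀ X ∈ Lᗮ, chi u v (chi u v X) = -X) ∧
    (∀ X ∈ Lᗮ, ∀ Y ∈ Lᗮ, ⟪chi u v X, chi u v Y⟫ = ⟪X, Y⟫) := by
  subst hL
  have hu : ⟪u, u⟫ = 1 := by simpa using orthonormal_iff_ite.mp h 0 0
  have hv : ⟪v, v⟫ = 1 := by simpa using orthonormal_iff_ite.mp h 1 1
  have huv : ⟪u, v⟫ = 0 := by simpa using orthonormal_iff_ite.mp h 0 1
  refine ⟨fun X _ => chi_mem_orthogonal_span u v X, fun X hX => ?_, fun X hX Y hY => ?_⟩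
  · obtain ⟨hXu, hXv, hXuv⟩ := Submodule.mem_orthogonal_span_triple_iff.mp hX
    exact chi_chi huv hu hv hXu hXv hXuv
  · obtain ⟨hXu, hXv, hXuv⟩ := Submodule.mem_orthogonal_span_triple_iff.mp hX
    obtain ⟨hYu, -, hYuv⟩ := Submodule.mem_orthogonal_span_triple_iff.mp hY
    rw [inner_chi_chi huv hXu hYu, hu, hv, hXv, hXuv]
    ring
end
end

section
/- For orthonormal vectors α, β in ℝ⁷, the 3-form identity α⌟(β⌟(β^#∧∗φ₀)) = α⌟∗φ₀ + (α⌟(β⌟∗φ₀)) ∧ β^# holds. (With Im Ω_α = α⌟∗φ₀, ⋆ω_β = β⌟(β^#∧∗φ₀), and Im Ω_β = β⌟∗φ₀, this says Im Ω_α = α⌟(⋆ω_β) − (α⌟Im Ω_β)∧β^# up to the sign conventions of wedge with a 1-form.) -/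
open scoped RealInnerProductSpace

noncomputable section

/-!
Contraction is an antiderivation: for an `(n+1)`-form `ω`,
`ξ ⌟ (ω ∧ η^#) = (ξ ⌟ ω) ∧ η^# + (-1)^(n+1) ⟨η, ξ⟩ ω`.
Since `β^# ∧ ∗φ₀ = ∗φ₀ ∧ β^#`, applying this with `ξ = β` and then `ξ = α`, and using
`⟨β, β⟩ = 1`, `⟨β, α⟩ = 0`, gives the identity. Nothing specific to G₂ enters: it holds for every
alternating 4-form in place of `∗φ₀`.
-/

open Equiv Equiv.Perm
open scoped Nat

def IsAntisymmetricForm {n : ℕ} (ω : (Fin n → V7) → ℝ) : Prop :=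
  ∀ (σ : Perm (Fin n)) (v : Fin n → V7), ω (v ∘ σ) = (sign σ : ℝ) * ω v

theorem isAntisymmetricForm_starPhi0 : IsAntisymmetricForm starPhi0 := by
  have hmat (w : Fin 4 → V7) (i j k l : Fin 7) :
      !![w 0 i, w 0 j, w 0 k, w 0 l; w 1 i, w 1 j, w 1 k, w 1 l;
         w 2 i, w 2 j, w 2 k, w 2 l; w 3 i, w 3 j, w 3 k, w 3 l]
        = Matrix.of fun r c => w r (![i, j, k, l] c) := by
    ext r c; fin_cases r <;> fin_cases c <;> rfl
  intro σ v
  have hdet (g : Fin 4 → Fin 7) : (Matrix.of fun r c => (v ∘ σ) r (g c)).det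
      = sign σ * (Matrix.of fun r c => v r (g c)).det :=
    Matrix.det_permute σ (Matrix.of fun r c => v r (g c))
  generalize v ∘ σ = w at hdet ⊢
  simp only [starPhi0, hmat, hdet]
  ring

theorem isAntisymmetricForm_iprod {n : ℕ} {ω : (Fin (n + 1) → V7) → ℝ}
    (hω : IsAntisymmetricForm ω) (ξ : V7) : IsAntisymmetricForm (iprod ξ ω) := by
  intro σ v
  have hcons : Fin.cons ξ (v ∘ σ) = Fin.cons ξ v ∘ decomposeFin.symm (0, σ) := by
    ext1 j
    cases j using Fin.cases <;>
      simp [decomposeFin_symm_apply_zero, decomposeFin_symm_apply_succ]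
  simp only [iprod]
  rw [hcons, hω, decomposeFin.symm_sign, if_pos rfl, one_mul]

theorem IsAntisymmetricForm.apply_comp_swap_succ {n : ℕ} {ω : (Fin n → V7) → ℝ}
    (hω : IsAntisymmetricForm ω) (v : Fin (n + 1) → V7) (p : Fin (n + 1)) :
    (if p = 0 then 1 else -1) * ω (v ∘ swap 0 p ∘ Fin.succ)
      = (-1) ^ (p : ℕ) * ω (p.removeNth v) := by
  cases p using Fin.cases with
  | zero => simp [Fin.removeNth_zero, Fin.tail_def, Function.comp_def]
  | succ i =>
    have hcycle : swap 0 i.succ ∘ Fin.succ = i.succ.succAbove ∘ i.cycleRange := by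
      ext1 j; simp [Fin.succAbove_cycleRange]
    change _ = _ * ω (v ∘ i.succ.succAbove)
    rw [hcycle, ← Function.comp_assoc, hω, Fin.sign_cycleRange, if_neg (Fin.succ_ne_zero i),
      Fin.val_succ, pow_succ]
    push_cast
    ring

theorem IsAntisymmetricForm.sum_perm_sign_mul_inner {n : ℕ} {ω : (Fin n → V7) → ℝ}
    (hω : IsAntisymmetricForm ω) (η : V7) (v : Fin (n + 1) → V7) :
    ∑ σ : Perm (Fin (n + 1)), (sign σ : ℝ) * ω (v ∘ σ ∘ Fin.succ) * ⟪η, v (σ 0)⟫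
      = n ! * ∑ p : Fin (n + 1), (-1) ^ (p : ℕ) * ω (p.removeNth v) * ⟪η, v p⟫ := by
  -- `decomposeFin` writes `σ` as `swap 0 p` after a permutation `e` of the other `n` slots,
  -- and `ω` turns `e` into its sign; each `p` thus contributes `n !` equal terms.
  rw [← Equiv.sum_comp decomposeFin.symm, Fintype.sum_prod_type, Finset.mul_sum]
  refine Finset.sum_congr rfl fun p _ => ?_
  have hterm (e : Perm (Fin n)) :
      (sign (decomposeFin.symm (p, e)) : ℝ) * ω (v ∘ decomposeFin.symm (p, e) ∘ Fin.succ)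
        * ⟪η, v (decomposeFin.symm (p, e) 0)⟫
      = (-1) ^ (p : ℕ) * ω (p.removeNth v) * ⟪η, v p⟫ := by
    have hcomp : v ∘ decomposeFin.symm (p, e) ∘ Fin.succ = (v ∘ swap 0 p ∘ Fin.succ) ∘ e := by
      ext1 j; simp [decomposeFin_symm_apply_succ]
    rw [hcomp, hω, decomposeFin_symm_apply_zero, decomposeFin.symm_sign,
      ← hω.apply_comp_swap_succ]
    rcases Int.units_eq_one_or (sign e) with he | he <;> split_ifs <;> simp [he]
  rw [Finset.sum_congr rfl fun e _ => hterm e]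
  simp [Fintype.card_perm]

theorem IsAntisymmetricForm.wedge_dualCov_apply {n : ℕ} {ω : (Fin n → V7) → ℝ}
    (hω : IsAntisymmetricForm ω) (η : V7) (v : Fin (n + 1) → V7) :
    wedge (p := n) (q := 1) ω (dualCov η) v
      = (-1) ^ n * ∑ p : Fin (n + 1), (-1) ^ (p : ℕ) * ω (p.removeNth v) * ⟪η, v p⟫ := by
  -- `finRotate` moves the slot of `η^#` from the last position to the first.
  have hterm (σ : Perm (Fin (n + 1))) :
      (sign (σ * finRotate (n + 1)) : ℝ)
          * ω (fun i => v ((σ * finRotate (n + 1)) (Fin.castAdd 1 i)))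
          * dualCov η (fun j => v ((σ * finRotate (n + 1)) (Fin.natAdd n j)))
        = (-1) ^ n * ((sign σ : ℝ) * ω (v ∘ σ ∘ Fin.succ) * ⟪η, v (σ 0)⟫) := by
    have hsucc (i : Fin n) : finRotate (n + 1) (Fin.castAdd 1 i) = i.succ :=
      Fin.coeSucc_eq_succ ▸ finRotate_apply _
    have hlast (j : Fin 1) : finRotate (n + 1) (Fin.natAdd n j) = 0 := by
      rw [Fin.eq_zero j]; exact finRotate_last
    simp only [Perm.mul_apply, hsucc, hlast, dualCov, Perm.sign_mul, sign_finRotate,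
      Function.comp_def]
    push_cast
    ring
  rw [wedge, ← Equiv.sum_comp (Equiv.mulRight (finRotate (n + 1)))]
  simp only [Equiv.coe_mulRight, hterm, ← Finset.mul_sum, hω.sum_perm_sign_mul_inner,
    Nat.factorial_one, Nat.cast_one, mul_one]
  field_simp

theorem IsAntisymmetricForm.iprod_wedge_dualCov {n : ℕ} {ω : (Fin (n + 1) → V7) → ℝ}
    (hω : IsAntisymmetricForm ω) (ξ η : V7) (v : Fin (n + 1) → V7) :
    iprod ξ (wedge (p := n + 1) (q := 1) ω (dualCov η)) v
      = (-1) ^ (n + 1) * ⟪η, ξ⟫ * ω v + wedge (p := n) (q := 1) (iprod ξ ω) (dualCov η) v := by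
  have hremove (p : Fin (n + 1)) :
      p.succ.removeNth (Fin.cons ξ v : Fin (n + 2) → V7) = Fin.cons ξ (p.removeNth v) :=
    Fin.cons_comp_succ_succAbove ξ v p
  rw [iprod, hω.wedge_dualCov_apply, (isAntisymmetricForm_iprod hω ξ).wedge_dualCov_apply,
    Fin.sum_univ_succ]
  simp only [Fin.removeNth_zero, Fin.tail_cons, hremove, Fin.cons_zero, Fin.cons_succ,
    Fin.val_zero, Fin.val_succ, iprod]
  rw [mul_add, Finset.mul_sum, Finset.mul_sum]
  congr 1
  · ring
  · exact Finset.sum_congr rfl fun p _ => by ring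

theorem wedge_dualCov_comm {n : ℕ} (η : V7) (ω : (Fin n → V7) → ℝ) (v : Fin (1 + n) → V7) :
    wedge (p := n) (q := 1) ω (dualCov η) (v ∘ Fin.cast (Nat.add_comm n 1))
      = (-1) ^ n * wedge (p := 1) (q := n) (dualCov η) ω v := by
  have hsucc (i : Fin n) :
      Fin.cast (Nat.add_comm n 1) (finRotate (n + 1) (Fin.castAdd 1 i)) = Fin.natAdd 1 i := by
    change Fin.cast _ (finRotate (n + 1) i.castSucc) = _
    rw [finRotate_apply, Fin.coeSucc_eq_succ]
    ext; simp [Nat.add_comm]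
  have hzero (j : Fin 1) :
      Fin.cast (Nat.add_comm n 1) (finRotate (n + 1) (Fin.natAdd n j)) = Fin.castAdd n j := by
    rw [Fin.eq_zero j, show Fin.natAdd n (0 : Fin 1) = Fin.last n from rfl, finRotate_last]
    rfl
  rw [wedge, wedge, ← Equiv.sum_comp ((permCongr (finCongr (Nat.add_comm n 1)).symm).trans
    (Equiv.mulRight (finRotate (n + 1))))]
  simp only [Equiv.trans_apply, Equiv.coe_mulRight, Perm.mul_apply, permCongr_apply, finCongr_apply,
    finCongr_symm, Function.comp_apply, Fin.cast_cast, Fin.cast_eq_self, hsucc, hzero,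
    Perm.sign_mul, sign_permCongr, sign_finRotate]
  rw [Nat.add_sub_cancel, Finset.mul_sum, Finset.mul_sum, Finset.mul_sum]
  refine Finset.sum_congr rfl fun σ _ => ?_
  push_cast
  ring

/-- for orthonormal α, β,
α⌟(β⌟(β^#∧∗φ₀)) = α⌟∗φ₀ + (α⌟(β⌟∗φ₀)) ∧ β^#. -/
theorem imOmega_duality (α β : V7) (h : Orthonormal ℝ ![α, β]) :
    iprod (k := 3) α (iprod (k := 4) β (wedge (p := 1) (q := 4) (dualCov β) starPhi0)) =
      fun v => iprod α starPhi0 v +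
        wedge (p := 2) (q := 1) (iprod α (iprod β starPhi0)) (dualCov β) v := by
  rw [orthonormal_iff_ite] at h
  have hββ : ⟪β, β⟫ = 1 := by simpa using h 1 1
  have hβα : ⟪β, α⟫ = 0 := by simpa using h 1 0
  have hφ := isAntisymmetricForm_starPhi0
  have hcomm : wedge (p := 1) (q := 4) (dualCov β) starPhi0
      = wedge (p := 4) (q := 1) starPhi0 (dualCov β) := by
    funext v
    have hv := wedge_dualCov_comm β starPhi0 v
    norm_num at hv
    exact hv.symm
  funext v
  have hβ := hφ.iprod_wedge_dualCov β β (Fin.cons α v)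
  have hα := (isAntisymmetricForm_iprod hφ β).iprod_wedge_dualCov α β v
  simp only [iprod] at hβ hα ⊢
  rw [hcomm, hβ, hα, hββ, hβα]
  ring

end
end

section
/- Let (u,v,w) be a G₂-frame in ℝ⁷ (orthonormal with φ₀(u,v,w)=0). Then φ₀(u×v, v×w, w×u) = −1; hence the 3-dimensional subspace 𝔼 = span{u×v, v×w, w×u} is an associative 3-plane (φ₀ restricts to ±1 times its volume form). -/
open scoped RealInnerProductSpace

noncomputable section

/-! Both sides of `φ₀(u×v, v×w, w×u) = 2 φ₀(u,v,w)² − det Gram(u,v,w)` are polynomials in the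
coordinates of `u, v, w`, so once the cross product is written out in coordinates the identity
is a ring normalisation. For a G₂-frame the Gram matrix is the identity and `φ₀(u,v,w) = 0`,
leaving `−1`. -/

theorem cross_eq_s16 (a b : V7) : cross a b = !₂[
    a 1 * b 2 - a 2 * b 1 + a 3 * b 4 - a 4 * b 3 + a 5 * b 6 - a 6 * b 5,
    a 2 * b 0 - a 0 * b 2 + a 3 * b 5 - a 5 * b 3 + a 6 * b 4 - a 4 * b 6,
    a 0 * b 1 - a 1 * b 0 + a 5 * b 4 - a 4 * b 5 + a 6 * b 3 - a 3 * b 6,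
    a 4 * b 0 - a 0 * b 4 + a 5 * b 1 - a 1 * b 5 + a 2 * b 6 - a 6 * b 2,
    a 0 * b 3 - a 3 * b 0 + a 1 * b 6 - a 6 * b 1 + a 2 * b 5 - a 5 * b 2,
    a 6 * b 0 - a 0 * b 6 + a 1 * b 3 - a 3 * b 1 + a 4 * b 2 - a 2 * b 4,
    a 0 * b 5 - a 5 * b 0 + a 3 * b 2 - a 2 * b 3 + a 4 * b 1 - a 1 * b 4] := by
  ext i
  fin_cases i <;>
    simp only [cross, phi0, PiLp.toLp_apply, PiLp.single_apply, Matrix.det_fin_three,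
      Matrix.of_apply, Matrix.cons_val', Matrix.cons_val_fin_one, Matrix.cons_val_zero,
      Matrix.cons_val_one, Matrix.cons_val, Fin.reduceEq, Fin.reduceFinMk, Fin.zero_eta,
      Fin.mk_one, ↓reduceIte, mul_one, mul_zero] <;>
    ring

theorem inner_cross (a b c : V7) : ⟪cross a b, c⟫ = phi0 ![a, b, c] := by
  simp only [cross_eq_s16, PiLp.inner_apply, RCLike.inner_apply, conj_trivial, Fin.sum_univ_seven,
    Matrix.cons_val_zero, Matrix.cons_val_one, Matrix.cons_val, phi0, Matrix.det_fin_three,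
    Matrix.of_apply, Matrix.cons_val', Matrix.cons_val_fin_one]
  ring

theorem phi0_cross_cross_cross (u v w : V7) :
    phi0 ![cross u v, cross v w, cross w u] =
      2 * phi0 ![u, v, w] ^ 2 - (Matrix.gram ℝ ![u, v, w]).det := by
  simp only [← inner_cross, Matrix.det_fin_three, Matrix.gram_apply, Matrix.cons_val_zero,
    Matrix.cons_val_one, Matrix.cons_val_two, Matrix.head_cons, Matrix.tail_cons]
  simp only [cross_eq_s16, PiLp.inner_apply, RCLike.inner_apply, conj_trivial, Fin.sum_univ_seven,
    Matrix.cons_val]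
  ring

/-- for a G₂-frame (u,v,w), φ₀(u×v, v×w, w×u) = −1, so the
3-plane 𝔼 = span{u×v, v×w, w×u} is associative. -/
theorem associative_E (u v w : V7) (h : Orthonormal ℝ ![u, v, w])
    (hφ : phi0 ![u, v, w] = 0) :
    phi0 ![cross u v, cross v w, cross w u] = -1 := by
  rw [phi0_cross_cross_cross, hφ, Matrix.gram_eq_one_iff_orthonormal.mpr h, Matrix.det_one]
  norm_num

end
end

section
/- Let (u,v,w) be a G₂-frame in ℝ⁷ (orthonormal with φ₀(u,v,w)=0), R = χ(u,v,w), R′ = (u×v+v×w+w×u)/√3, R″ = (u+v+w)/√3. Then for all real a, b, c with a+b+c = 0: √3 R′×(au+bv+cw) = (c−b)u + (a−c)v + (b−a)w, and √3 R′×(a(v×w)+b(w×u)+c(u×v)) = (b−c)(v×w) + (c−a)(w×u) + (a−b)(u×v); moreover R′×R″ = R. -/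
open scoped RealInnerProductSpace

noncomputable section

/-!
Everything rests on the identity `x × (y × z) = ⟪x, z⟫ y - ⟪x, y⟫ z - χ(x, y, z)`, a polynomial
identity between the explicit forms φ₀ and ∗φ₀. For a G₂-frame it gives `u × (u × v) = -v`,
`u × (v × w) = -χ(u, v, w)`, `u × (w × u) = w` and `(u × v) × (v × w) = u × w`. Hence
`A = u × v + v × w + w × u = √3 R′` satisfies `A × u = v - w + R` and
`A × (v × w) = u × w + u × v`; since the frame conditions are invariant under cyclic rotation of
`(u, v, w)`, this determines `A` on `u, v, w` and on their cross products. The first two claims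
follow by linearity after eliminating `c = -a - b`, and `A × (u + v + w) = 3R` gives `R′ × R″ = R`.
-/

lemma Matrix.det_fin_four_of {R : Type*} [CommRing R] (a b c d e f g h i j k l m n o p : R) :
    Matrix.det !![a, b, c, d; e, f, g, h; i, j, k, l; m, n, o, p] =
      a * (f * (k * p - l * o) - g * (j * p - l * n) + h * (j * o - k * n))
      - b * (e * (k * p - l * o) - g * (i * p - l * m) + h * (i * o - k * m))
      + c * (e * (j * p - l * n) - f * (i * p - l * m) + h * (i * n - j * m))
      - d * (e * (j * o - k * n) - f * (i * o - k * m) + g * (i * n - j * m)) := by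
  rw [Matrix.det_succ_row_zero]
  simp [Fin.sum_univ_succ, Matrix.det_fin_three, Matrix.submatrix_apply, Fin.succAbove]
  ring

namespace G2

lemma phi0_rotate (x y z : V7) : phi0 ![y, z, x] = phi0 ![x, y, z] := by
  simp [phi0, Matrix.det_fin_three]
  ring

lemma inner_cross (x y z : V7) : ⟪z, cross x y⟫ = phi0 ![x, y, z] := by
  simp [PiLp.inner_apply, Fin.sum_univ_seven, cross, phi0, Matrix.det_fin_three]
  ring

lemma inner_chi (x y z t : V7) : ⟪t, chi x y z⟫ = starPhi0 ![x, y, z, t] := by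
  simp [PiLp.inner_apply, Fin.sum_univ_seven, chi, starPhi0, Matrix.det_fin_four_of]
  ring

lemma inner_self_cross (x y : V7) : ⟪x, cross x y⟫ = 0 := by
  rw [inner_cross]
  simp [phi0, Matrix.det_fin_three]
  ring

lemma cross_add_left (x y z : V7) : cross (x + y) z = cross x z + cross y z := by
  refine ext_inner_left ℝ fun t => ?_
  rw [inner_add_right, inner_cross, inner_cross, inner_cross]
  simp [phi0, Matrix.det_fin_three]
  ring

lemma cross_smul_left (a : ℝ) (x y : V7) : cross (a • x) y = a • cross x y := by
  refine ext_inner_left ℝ fun t => ?_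
  rw [inner_smul_right, inner_cross, inner_cross]
  simp [phi0, Matrix.det_fin_three]
  ring

lemma cross_anticomm (x y : V7) : cross x y = -cross y x := by
  refine ext_inner_left ℝ fun t => ?_
  rw [inner_neg_right, inner_cross, inner_cross]
  simp [phi0, Matrix.det_fin_three]
  ring

lemma cross_self (x : V7) : cross x x = 0 := by
  have h := cross_anticomm x x
  rwa [eq_neg_iff_add_eq_zero, ← two_smul ℝ, smul_eq_zero_iff_right two_ne_zero] at h

lemma cross_add_right (x y z : V7) : cross x (y + z) = cross x y + cross x z := by
  rw [cross_anticomm, cross_add_left, neg_add, ← cross_anticomm, ← cross_anticomm]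

lemma cross_smul_right (a : ℝ) (x y : V7) : cross x (a • y) = a • cross x y := by
  rw [cross_anticomm, cross_smul_left, ← smul_neg, ← cross_anticomm]

lemma cross_neg_right (x y : V7) : cross x (-y) = -cross x y := by
  simpa using cross_smul_right (-1) x y

lemma chi_rotate (x y z : V7) : chi y z x = chi x y z := by
  refine ext_inner_left ℝ fun t => ?_
  rw [inner_chi, inner_chi]
  simp [starPhi0, Matrix.det_fin_four_of]
  ring

lemma chi_self_left (x y : V7) : chi x x y = 0 := by
  refine ext_inner_left ℝ fun t => ?_
  rw [inner_chi, inner_zero_right]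
  simp [starPhi0, Matrix.det_fin_four_of]
  ring

lemma chi_self_right (x y : V7) : chi x y x = 0 := by
  rw [← chi_rotate, ← chi_rotate, chi_self_left]

lemma cross_cross_right (x y z : V7) :
    cross x (cross y z) = ⟪x, z⟫ • y - ⟪x, y⟫ • z - chi x y z := by
  refine ext_inner_left ℝ fun t => ?_
  rw [inner_cross, inner_sub_right, inner_sub_right, inner_smul_right, inner_smul_right, inner_chi]
  simp [PiLp.inner_apply, Fin.sum_univ_seven, cross, phi0, starPhi0,
    Matrix.det_fin_three, Matrix.det_fin_four_of]
  ring

lemma cross_cross_self (x y : V7) : cross x (cross x y) = ⟪x, y⟫ • x - ⟪x, x⟫ • y := by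
  rw [cross_cross_right, chi_self_left, sub_zero]

lemma cross_cross_left (x y z : V7) :
    cross (cross x y) z = (2 * ⟪x, z⟫) • y - ⟪y, z⟫ • x - ⟪x, y⟫ • z - cross x (cross y z) := by
  have hχ : chi x y z = ⟪x, z⟫ • y - ⟪x, y⟫ • z - cross x (cross y z) := by
    rw [cross_cross_right]; abel
  rw [cross_anticomm, cross_cross_right, ← chi_rotate z x y, hχ, real_inner_comm z x,
    real_inner_comm z y]
  module

structure IsG2Frame (u v w : V7) : Prop where
  inner_u_u : ⟪u, u⟫ = 1
  inner_v_v : ⟪v, v⟫ = 1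
  inner_w_w : ⟪w, w⟫ = 1
  inner_u_v : ⟪u, v⟫ = 0
  inner_v_w : ⟪v, w⟫ = 0
  inner_w_u : ⟪w, u⟫ = 0
  phi0_eq_zero : phi0 ![u, v, w] = 0

def crossSum (u v w : V7) : V7 := cross u v + cross v w + cross w u

lemma crossSum_rotate (u v w : V7) : crossSum v w u = crossSum u v w := by
  unfold crossSum; abel

namespace IsG2Frame

variable {u v w : V7}

lemma of_orthonormal (h : Orthonormal ℝ ![u, v, w]) (hφ : phi0 ![u, v, w] = 0) :
    IsG2Frame u v w where
  inner_u_u := by simpa using (orthonormal_iff_ite.mp h) 0 0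
  inner_v_v := by simpa using (orthonormal_iff_ite.mp h) 1 1
  inner_w_w := by simpa using (orthonormal_iff_ite.mp h) 2 2
  inner_u_v := by simpa using (orthonormal_iff_ite.mp h) 0 1
  inner_v_w := by simpa using (orthonormal_iff_ite.mp h) 1 2
  inner_w_u := by simpa using (orthonormal_iff_ite.mp h) 2 0
  phi0_eq_zero := hφ

lemma rotate (h : IsG2Frame u v w) : IsG2Frame v w u where
  inner_u_u := h.inner_v_v
  inner_v_v := h.inner_w_w
  inner_w_w := h.inner_u_u
  inner_u_v := h.inner_v_w
  inner_v_w := h.inner_w_u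
  inner_w_u := h.inner_u_v
  phi0_eq_zero := by rw [phi0_rotate]; exact h.phi0_eq_zero

lemma inner_cross (h : IsG2Frame u v w) : ⟪u, cross v w⟫ = 0 := by
  rw [G2.inner_cross, phi0_rotate, h.phi0_eq_zero]

lemma cross_cross_cross (h : IsG2Frame u v w) : cross (cross u v) (cross v w) = cross u w := by
  rw [cross_cross_left, h.inner_cross, inner_self_cross, h.inner_u_v, cross_cross_self,
    h.inner_v_w, h.inner_v_v]
  simp only [mul_zero, zero_smul, one_smul, zero_sub, sub_zero, cross_neg_right, neg_neg]

lemma crossSum_cross (h : IsG2Frame u v w) : cross (crossSum u v w) u = v - w + chi u v w := by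
  rw [crossSum, cross_add_left, cross_add_left, cross_anticomm (cross u v),
    cross_anticomm (cross v w), cross_anticomm (cross w u), cross_cross_self,
    cross_cross_right, cross_cross_right u w u, chi_self_right, real_inner_comm w u,
    h.inner_u_u, h.inner_u_v, h.inner_w_u]
  module

lemma crossSum_cross_cross (h : IsG2Frame u v w) :
    cross (crossSum u v w) (cross v w) = cross u w + cross u v := by
  rw [crossSum, cross_add_left, cross_add_left, h.cross_cross_cross, cross_self,
    cross_anticomm (cross w u), h.rotate.cross_cross_cross, cross_anticomm v u]
  abel

end IsG2Frame

end G2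

/-- for a G₂-frame (u,v,w) and a+b+c=0:
√3 R′×(au+bv+cw) = (c−b)u+(a−c)v+(b−a)w,
√3 R′×(a(v×w)+b(w×u)+c(u×v)) = (b−c)(v×w)+(c−a)(w×u)+(a−b)(u×v),
and R′×R″ = R. -/
theorem J_R_prime (u v w : V7) (h : Orthonormal ℝ ![u, v, w])
    (hφ : phi0 ![u, v, w] = 0) (R R' R'' : V7) (hR : R = chi u v w)
    (hR' : R' = (Real.sqrt 3)⁻¹ • (cross u v + cross v w + cross w u))
    (hR'' : R'' = (Real.sqrt 3)⁻¹ • (u + v + w)) :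
    (∀ a b c : ℝ, a + b + c = 0 →
      Real.sqrt 3 • cross R' (a • u + b • v + c • w) =
        (c - b) • u + (a - c) • v + (b - a) • w ∧
      Real.sqrt 3 • cross R' (a • cross v w + b • cross w u + c • cross u v) =
        (b - c) • cross v w + (c - a) • cross w u + (a - b) • cross u v) ∧
    cross R' R'' = R := by
  set A := G2.crossSum u v w
  have hu := G2.IsG2Frame.of_orthonormal h hφ
  have hv := hu.rotate
  have hw := hv.rotate
  have hAu : cross A u = v - w + R := hR ▸ hu.crossSum_cross
  have hAv : cross A v = w - u + R := by
    rw [hR, ← G2.chi_rotate, ← hv.crossSum_cross, G2.crossSum_rotate]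
  have hAw : cross A w = u - v + R := by
    rw [hR, G2.chi_rotate, ← hw.crossSum_cross, G2.crossSum_rotate, G2.crossSum_rotate]
  have hAvw : cross A (cross v w) = cross u w + cross u v := hu.crossSum_cross_cross
  have hAwu : cross A (cross w u) = cross v u + cross v w := by
    rw [← hv.crossSum_cross_cross, G2.crossSum_rotate]
  have hAuv : cross A (cross u v) = cross w v + cross w u := by
    rw [← hw.crossSum_cross_cross, G2.crossSum_rotate, G2.crossSum_rotate]
  have hR'A : R' = (Real.sqrt 3)⁻¹ • A := hR'
  have h3R' (x : V7) : Real.sqrt 3 • cross R' x = cross A x := by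
    rw [hR'A, G2.cross_smul_left, smul_inv_smul₀ (by positivity)]
  refine ⟨fun a b c habc => ?_, ?_⟩
  · obtain rfl : c = -a - b := by linarith
    rw [h3R', h3R']
    simp only [G2.cross_add_right, G2.cross_smul_right, hAu, hAv, hAw, hAvw, hAwu, hAuv,
      G2.cross_anticomm w v, G2.cross_anticomm v u, G2.cross_anticomm u w]
    constructor <;> module
  · rw [hR'A, hR'', G2.cross_smul_left, G2.cross_smul_right, G2.cross_add_right,
      G2.cross_add_right, hAu, hAv, hAw, smul_smul, ← mul_inv, Real.mul_self_sqrt (by norm_num)]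
    module

end
end
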